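/- arXiv:1509.01933 — 7 statements merged into one kernel-verified Lean document; each statement's English description precedes it below -/
import Mathlib

section
/- The map Φ : A ×_T B → A × B (with coordinatewise product on the codomain) defined by Φ(a,b) = (a + T(b), b) is an algebra isomorphism from the T-Lau product onto the direct product algebra, with inverse (a,b) ↦ (a − T(b), b). -/
/-- The T-Lau product multiplication on `A × B`. -/
def lauMul {A B : Type*} [NonUnitalNormedRing A] [NonUnitalNormedRing B]
    [NormedSpace ℂ A] [NormedSpace ℂ B]
    (T : B →L[ℂ] A) (p q : A × B) : A × B :=
  (p.1 * q.1 + T p.2 * q.1 + p.1 * T q.2, p.2 * q.2)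

/-- `Φ(a,b) = (a + T(b), b)` is an algebra isomorphism from `A ×_T B` onto the direct
product algebra `A × B` (coordinatewise multiplication), with inverse
`(a,b) ↦ (a − T(b), b)`. -/
theorem lau_iso_direct_product {A B : Type*}
    [NonUnitalNormedRing A] [NormedSpace ℂ A] [CompleteSpace A]
    [NonUnitalNormedRing B] [NormedSpace ℂ B] [CompleteSpace B]
    (T : B →L[ℂ] A) (hTmul : ∀ x y : B, T (x * y) = T x * T y) :
    let Φ : A × B → A × B := fun p => (p.1 + T p.2, p.2)
    let Ψ : A × B → A × B := fun p => (p.1 - T p.2, p.2)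
    (∀ p q : A × B, Φ (p + q) = Φ p + Φ q) ∧
    (∀ (s : ℂ) (p : A × B), Φ (s • p) = s • Φ p) ∧
    (∀ p q : A × B, Φ (lauMul T p q) = (((Φ p).1 * (Φ q).1, (Φ p).2 * (Φ q).2) : A × B)) ∧
    (∀ p : A × B, Φ (Ψ p) = p) ∧
    (∀ p : A × B, Ψ (Φ p) = p) := by
  refine ⟨fun p q => ?_, fun s p => ?_, fun p q => ?_, fun p => ?_, fun p => ?_⟩
  · simp [Prod.ext_iff]; abel
  · simp [Prod.ext_iff]
  · simp [lauMul, Prod.ext_iff, hTmul, mul_add, add_mul]; abel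
  · simp
  · simp
end

section
/- If A ×_T B is injective as a Banach left C-module, then A is injective as a Banach left C-module, where A ×_T B carries the action c·(a,b) = (c·a + c·T(b), 0) induced from a given left C-module structure on A. -/
/-- A (bounded) left Banach-module action of the Banach algebra `C` on the Banach
space `E`, given as a family of continuous linear operators. -/
def IsBanachAction (C : Type*) [NonUnitalNormedRing C] [NormedSpace ℂ C]
    (E : Type*) [NormedAddCommGroup E] [NormedSpace ℂ E]
    (σ : C → E →L[ℂ] E) : Prop :=
  (∀ c₁ c₂ : C, σ (c₁ * c₂) = (σ c₁).comp (σ c₂)) ∧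
  (∀ c₁ c₂ : C, σ (c₁ + c₂) = σ c₁ + σ c₂) ∧
  (∀ (s : ℂ) (c : C), σ (s • c) = s • σ c) ∧
  (∃ M : ℝ, ∀ c : C, ‖σ c‖ ≤ M * ‖c‖)

/-- A Banach left `C`-module `(K, σK)` is injective if for every admissible monomorphism
`S : E → F` of Banach left `C`-modules, every bounded `C`-module morphism `E → K`
factors through `S` via a bounded `C`-module morphism `F → K`. -/
def IsInjectiveMod (C : Type*) [NonUnitalNormedRing C] [NormedSpace ℂ C]
    (K : Type*) [NormedAddCommGroup K] [NormedSpace ℂ K]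
    (σK : C → K →L[ℂ] K) : Prop :=
  ∀ (E : Type) [NormedAddCommGroup E] [NormedSpace ℂ E] [CompleteSpace E]
    (F : Type) [NormedAddCommGroup F] [NormedSpace ℂ F] [CompleteSpace F]
    (σE : C → E →L[ℂ] E) (σF : C → F →L[ℂ] F),
    IsBanachAction C E σE → IsBanachAction C F σF →
    ∀ S : E →L[ℂ] F, Function.Injective S →
      (∀ c x, S (σE c x) = σF c (S x)) →
      (∃ S' : F →L[ℂ] E, ∀ x, S (S' (S x)) = S x) →
      ∀ lam : E →L[ℂ] K, (∀ c x, lam (σE c x) = σK c (lam x)) →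
        ∃ R : F →L[ℂ] K, (∀ c y, R (σF c y) = σK c (R y)) ∧ ∀ x, R (S x) = lam x

/-- If `A ×_T B` is injective as a Banach left `C`-module with the action
`c·(a,b) = (c·a + c·T(b), 0)` induced from a given left `C`-module structure on `A`,
then `A` is injective as a Banach left `C`-module. -/
theorem lau_injective_implies_A_injective {A B C : Type*}
    [NonUnitalNormedRing A] [NormedSpace ℂ A] [CompleteSpace A]
    [NonUnitalNormedRing B] [NormedSpace ℂ B] [CompleteSpace B]
    [NonUnitalNormedRing C] [NormedSpace ℂ C] [CompleteSpace C]
    (T : B →L[ℂ] A) (hTmul : ∀ x y : B, T (x * y) = T x * T y)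
    (hTnorm : ∀ b : B, ‖T b‖ ≤ ‖b‖)
    (σ : C → A →L[ℂ] A) (hσ : IsBanachAction C A σ)
    (hinj : IsInjectiveMod C (A × B)
      (fun c => ((σ c).comp (ContinuousLinearMap.fst ℂ A B +
        T.comp (ContinuousLinearMap.snd ℂ A B))).prod 0)) :
    IsInjectiveMod C A σ := by
  intro E _ _ _ F _ _ _ σE σF hE hF S hSinj hSmod hadm lam hlam
  -- inclusion A → A × B and projection (a,b) ↦ a + T b
  set ι : A →L[ℂ] A × B := ContinuousLinearMap.inl ℂ A B with hι
  set P : A × B →L[ℂ] A :=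
    ContinuousLinearMap.fst ℂ A B + T.comp (ContinuousLinearMap.snd ℂ A B) with hP
  have hmod : ∀ c x, (ι.comp lam) (σE c x) =
      (((σ c).comp (ContinuousLinearMap.fst ℂ A B +
        T.comp (ContinuousLinearMap.snd ℂ A B))).prod 0) ((ι.comp lam) x) := by
    intro c x
    simp only [ContinuousLinearMap.comp_apply, hlam c x]
    simp [hι, ContinuousLinearMap.prod_apply]
  obtain ⟨R, hRmod, hRfac⟩ := hinj E F σE σF hE hF S hSinj hSmod hadm (ι.comp lam) hmod
  refine ⟨P.comp R, ?_, ?_⟩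
  · intro c y
    simp only [ContinuousLinearMap.comp_apply, hRmod c y]
    simp [hP, ContinuousLinearMap.prod_apply]
  · intro x
    have := hRfac x
    simp only [ContinuousLinearMap.comp_apply] at this ⊢
    rw [this]
    simp [hP, hι]
end

section
/- If A ×_T B is injective as a Banach left C-module, then B is injective as a Banach left C-module, where A ×_T B carries the action c·(a,b) = (−T(c·b), c·b) induced from a given left C-module structure on B. -/
/-- If `A ×_T B` is injective as a Banach left `C`-module with the action
`c·(a,b) = (−T(c·b), c·b)` induced from a given left `C`-module structure on `B`,
then `B` is injective as a Banach left `C`-module. -/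
theorem lau_injective_implies_B_injective {A B C : Type*}
    [NonUnitalNormedRing A] [NormedSpace ℂ A] [CompleteSpace A]
    [NonUnitalNormedRing B] [NormedSpace ℂ B] [CompleteSpace B]
    [NonUnitalNormedRing C] [NormedSpace ℂ C] [CompleteSpace C]
    (T : B →L[ℂ] A) (hTmul : ∀ x y : B, T (x * y) = T x * T y)
    (hTnorm : ∀ b : B, ‖T b‖ ≤ ‖b‖)
    (σ : C → B →L[ℂ] B) (hσ : IsBanachAction C B σ)
    (hinj : IsInjectiveMod C (A × B)
      (fun c => (-(T.comp ((σ c).comp (ContinuousLinearMap.snd ℂ A B)))).prod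
        ((σ c).comp (ContinuousLinearMap.snd ℂ A B)))) :
    IsInjectiveMod C B σ := by
  intro E _ _ _ F _ _ _ σE σF hE hF S hSinj hSmod hS' lam hlam
  obtain ⟨R, hRmod, hRS⟩ := hinj E F σE σF hE hF S hSinj hSmod hS'
    (((-T.comp lam)).prod lam)
    (by
      intro c x
      simp only [ContinuousLinearMap.prod_apply, ContinuousLinearMap.neg_apply,
        ContinuousLinearMap.comp_apply, ContinuousLinearMap.coe_snd', hlam])
  refine ⟨(ContinuousLinearMap.snd ℂ A B).comp R, ?_, ?_⟩
  · intro c y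
    simp only [ContinuousLinearMap.comp_apply, ContinuousLinearMap.coe_snd', hRmod c y]
    rfl
  · intro x
    simp only [ContinuousLinearMap.comp_apply, ContinuousLinearMap.coe_snd', hRS x]
    rfl
end

section
/- Suppose A ×_T B is a Banach left C-module, and give A and B the induced C-module actions c·a := P_A(c·(a,0)) etc. (assuming the action leaves the factors appropriately compatible). If A and B are injective Banach left C-modules, then A ×_T B is an injective Banach left C-module. -/
/-- Suppose `A ×_T B` is a Banach left `C`-module whose action `τ` is compatible with the
decomposition (the copy `A × {0}` and the complementary copy `η_B(B) = {(−T(b), b)}` of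
`B` are `C`-submodules), and give `A` and `B` the induced actions `c·a = c·(a,0)` and
`c·b = c·(0,b)`. If `A` and `B` are injective Banach left `C`-modules, then so is
`A ×_T B`. -/
theorem lau_injective_of_A_B_injective {A B C : Type*}
    [NonUnitalNormedRing A] [NormedSpace ℂ A] [CompleteSpace A]
    [NonUnitalNormedRing B] [NormedSpace ℂ B] [CompleteSpace B]
    [NonUnitalNormedRing C] [NormedSpace ℂ C] [CompleteSpace C]
    (T : B →L[ℂ] A) (hTmul : ∀ x y : B, T (x * y) = T x * T y)
    (hTnorm : ∀ b : B, ‖T b‖ ≤ ‖b‖)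
    (τ : C → (A × B) →L[ℂ] (A × B)) (hτ : IsBanachAction C (A × B) τ)
    (hcompatA : ∀ (c : C) (a : A), (τ c (a, 0)).2 = 0)
    (hcompatB : ∀ (c : C) (b : B),
      τ c (-(T b), b) = (-(T ((τ c (0, b)).2)), (τ c (0, b)).2))
    (hA : IsInjectiveMod C A (fun c => (ContinuousLinearMap.fst ℂ A B).comp
      ((τ c).comp (ContinuousLinearMap.inl ℂ A B))))
    (hB : IsInjectiveMod C B (fun c => (ContinuousLinearMap.snd ℂ A B).comp
      ((τ c).comp (ContinuousLinearMap.inr ℂ A B)))) :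
    IsInjectiveMod C (A × B) τ := by

  -- abbreviations for the induced actions
  set σA : C → A →L[ℂ] A := fun c => (ContinuousLinearMap.fst ℂ A B).comp
      ((τ c).comp (ContinuousLinearMap.inl ℂ A B)) with hσA
  set σB : C → B →L[ℂ] B := fun c => (ContinuousLinearMap.snd ℂ A B).comp
      ((τ c).comp (ContinuousLinearMap.inr ℂ A B)) with hσB
  have hσAval : ∀ c a, σA c a = (τ c (a, 0)).1 := fun c a => rfl
  have hσBval : ∀ c b, σB c b = (τ c (0, b)).2 := fun c b => rfl
  -- key structure formula for τ
  have fact1 : ∀ (c : C) (a : A) (b : B),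
      τ c (a, b) = (σA c (a + T b) - T (σB c b), σB c b) := by
    intro c a b
    have h1 : ((a, b) : A × B) = (a + T b, 0) + (-(T b), b) := by
      ext <;> simp
    have h2 : τ c (a + T b, 0) = (σA c (a + T b), 0) := by
      ext
      · rw [hσAval]
      · exact hcompatA c _
    rw [h1, map_add, h2, hcompatB c b]
    ext
    · simp [hσBval, sub_eq_add_neg]
    · simp [hσBval]
  intro E _ _ _ F _ _ _ σE σF hE hF S hSinj hSmod hSretr lam hlammod
  -- component maps
  set lamA : E →L[ℂ] A := (ContinuousLinearMap.fst ℂ A B + T.comp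
      (ContinuousLinearMap.snd ℂ A B)).comp lam with hlamA
  set lamB : E →L[ℂ] B := (ContinuousLinearMap.snd ℂ A B).comp lam with hlamB
  have hlamAval : ∀ x, lamA x = (lam x).1 + T (lam x).2 := fun x => rfl
  have hlamBval : ∀ x, lamB x = (lam x).2 := fun x => rfl
  have hlamAmod : ∀ c x, lamA (σE c x) = σA c (lamA x) := by
    intro c x
    rw [hlamAval, hlamAval, hlammod, fact1]
    simp
  have hlamBmod : ∀ c x, lamB (σE c x) = σB c (lamB x) := by
    intro c x
    rw [hlamBval, hlamBval, hlammod, fact1]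
  obtain ⟨RA, hRAmod, hRAS⟩ := hA E F σE σF hE hF S hSinj hSmod hSretr lamA hlamAmod
  obtain ⟨RB, hRBmod, hRBS⟩ := hB E F σE σF hE hF S hSinj hSmod hSretr lamB hlamBmod
  refine ⟨(RA - T.comp RB).prod RB, ?_, ?_⟩
  · intro c y
    have h1 : ((RA - T.comp RB).prod RB) y = (RA y - T (RB y), RB y) := rfl
    have h2 : ((RA - T.comp RB).prod RB) (σF c y)
        = (RA (σF c y) - T (RB (σF c y)), RB (σF c y)) := rfl
    rw [h1, h2, hRAmod, hRBmod, fact1]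
    ext <;> simp
  · intro x
    have h1 : ((RA - T.comp RB).prod RB) (S x) = (RA (S x) - T (RB (S x)), RB (S x)) := rfl
    rw [h1, hRAS, hRBS, hlamAval, hlamBval]
    ext <;> simp
end

section
/- A ×_T B is flat as a right Banach C-module if and only if both A and B are flat as right Banach C-modules. -/
/-- A (bounded) right Banach-module action of `C` on `K`, written `ρ c x = x·c`. -/
def IsBanachRightAction (C : Type*) [NonUnitalNormedRing C] [NormedSpace ℂ C]
    (K : Type*) [NormedAddCommGroup K] [NormedSpace ℂ K]
    (ρ : C → K →L[ℂ] K) : Prop :=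
  (∀ c₁ c₂ : C, ρ (c₁ * c₂) = (ρ c₂).comp (ρ c₁)) ∧
  (∀ c₁ c₂ : C, ρ (c₁ + c₂) = ρ c₁ + ρ c₂) ∧
  (∀ (s : ℂ) (c : C), ρ (s • c) = s • ρ c) ∧
  (∃ M : ℝ, ∀ c : C, ‖ρ c‖ ≤ M * ‖c‖)

/-- The dual left action `(c·f)(x) = f(x·c)` on the dual space `K*`. -/
noncomputable def dualAction (C : Type*) [NonUnitalNormedRing C] [NormedSpace ℂ C]
    (K : Type*) [NormedAddCommGroup K] [NormedSpace ℂ K]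
    (ρ : C → K →L[ℂ] K) : C → (K →L[ℂ] ℂ) →L[ℂ] (K →L[ℂ] ℂ) :=
  fun c => (ContinuousLinearMap.compL ℂ K K ℂ).flip (ρ c)

/-- A Banach right `C`-module `(K, ρ)` is flat if its dual `K*`, with the dual left
action, is an injective Banach left `C`-module. -/
noncomputable def IsFlatMod (C : Type*) [NonUnitalNormedRing C] [NormedSpace ℂ C]
    (K : Type*) [NormedAddCommGroup K] [NormedSpace ℂ K]
    (ρ : C → K →L[ℂ] K) : Prop :=
  IsInjectiveMod C (K →L[ℂ] ℂ) (dualAction C K ρ)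

set_option maxHeartbeats 1000000

/-- Let `A ×_T B` be a Banach right `C`-module whose action `ρ` leaves the copies of `A`
and `B` invariant, and give `A` and `B` the induced right actions via `a ↦ (a,0)` and
`b ↦ (0,b)`. Then `A ×_T B` is flat as a right Banach `C`-module if and only if both `A`
and `B` are flat as right Banach `C`-modules. -/
theorem lau_flat_iff {A B C : Type*}
    [NonUnitalNormedRing A] [NormedSpace ℂ A] [CompleteSpace A]
    [NonUnitalNormedRing B] [NormedSpace ℂ B] [CompleteSpace B]
    [NonUnitalNormedRing C] [NormedSpace ℂ C] [CompleteSpace C]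
    (T : B →L[ℂ] A) (hTmul : ∀ x y : B, T (x * y) = T x * T y)
    (hTnorm : ∀ b : B, ‖T b‖ ≤ ‖b‖)
    (ρ : C → (A × B) →L[ℂ] (A × B)) (hρ : IsBanachRightAction C (A × B) ρ)
    (hcompatA : ∀ (c : C) (a : A), (ρ c (a, 0)).2 = 0)
    (hcompatB : ∀ (c : C) (b : B), (ρ c (0, b)).1 = 0) :
    IsFlatMod C (A × B) ρ ↔
      (IsFlatMod C A (fun c => (ContinuousLinearMap.fst ℂ A B).comp
        ((ρ c).comp (ContinuousLinearMap.inl ℂ A B))) ∧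
       IsFlatMod C B (fun c => (ContinuousLinearMap.snd ℂ A B).comp
        ((ρ c).comp (ContinuousLinearMap.inr ℂ A B)))) := by
  classical
  set ρA : C → A →L[ℂ] A := fun c => (ContinuousLinearMap.fst ℂ A B).comp
      ((ρ c).comp (ContinuousLinearMap.inl ℂ A B)) with hρAdef
  set ρB : C → B →L[ℂ] B := fun c => (ContinuousLinearMap.snd ℂ A B).comp
      ((ρ c).comp (ContinuousLinearMap.inr ℂ A B)) with hρBdef
  set ιA : (A →L[ℂ] ℂ) →L[ℂ] ((A × B) →L[ℂ] ℂ) :=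
    (ContinuousLinearMap.compL ℂ (A × B) A ℂ).flip (ContinuousLinearMap.fst ℂ A B) with hιAdef
  set ιB : (B →L[ℂ] ℂ) →L[ℂ] ((A × B) →L[ℂ] ℂ) :=
    (ContinuousLinearMap.compL ℂ (A × B) B ℂ).flip (ContinuousLinearMap.snd ℂ A B) with hιBdef
  set πA : ((A × B) →L[ℂ] ℂ) →L[ℂ] (A →L[ℂ] ℂ) :=
    (ContinuousLinearMap.compL ℂ A (A × B) ℂ).flip (ContinuousLinearMap.inl ℂ A B) with hπAdef
  set πB : ((A × B) →L[ℂ] ℂ) →L[ℂ] (B →L[ℂ] ℂ) :=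
    (ContinuousLinearMap.compL ℂ B (A × B) ℂ).flip (ContinuousLinearMap.inr ℂ A B) with hπBdef
  have hιAapp : ∀ (g : A →L[ℂ] ℂ) (x : A × B), ιA g x = g x.1 := fun g x => rfl
  have hιBapp : ∀ (g : B →L[ℂ] ℂ) (x : A × B), ιB g x = g x.2 := fun g x => rfl
  have hπAapp : ∀ (f : (A × B) →L[ℂ] ℂ) (a : A), πA f a = f (a, 0) := fun f a => rfl
  have hπBapp : ∀ (f : (A × B) →L[ℂ] ℂ) (b : B), πB f b = f (0, b) := fun f b => rfl
  have hdA : ∀ (c : C) (g : A →L[ℂ] ℂ) (a : A),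
      dualAction C A ρA c g a = g (ρA c a) := fun c g a => rfl
  have hdB : ∀ (c : C) (g : B →L[ℂ] ℂ) (b : B),
      dualAction C B ρB c g b = g (ρB c b) := fun c g b => rfl
  have hdAB : ∀ (c : C) (f : (A × B) →L[ℂ] ℂ) (x : A × B),
      dualAction C (A × B) ρ c f x = f (ρ c x) := fun c f x => rfl
  have hA0 : ∀ (c : C) (a : A), ρ c (a, 0) = (ρA c a, 0) := by
    intro c a
    ext
    · rfl
    · exact hcompatA c a
  have hB0 : ∀ (c : C) (b : B), ρ c (0, b) = (0, ρB c b) := by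
    intro c b
    ext
    · exact hcompatB c b
    · rfl
  have hsplit : ∀ (c : C) (x : A × B), ρ c x = (ρA c x.1, ρB c x.2) := by
    intro c x
    have hx : x = (x.1, (0 : B)) + ((0 : A), x.2) := by
      ext <;> simp
    conv_lhs => rw [hx]
    rw [map_add, hA0, hB0, Prod.mk_add_mk, add_zero, zero_add]
  have hπAmod : ∀ (c : C) (f : (A × B) →L[ℂ] ℂ),
      πA (dualAction C (A × B) ρ c f) = dualAction C A ρA c (πA f) := by
    intro c f
    ext a
    rw [hπAapp, hdAB, hdA, hπAapp, hA0]
  have hπBmod : ∀ (c : C) (f : (A × B) →L[ℂ] ℂ),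
      πB (dualAction C (A × B) ρ c f) = dualAction C B ρB c (πB f) := by
    intro c f
    ext b
    rw [hπBapp, hdAB, hdB, hπBapp, hB0]
  have hιAmod : ∀ (c : C) (g : A →L[ℂ] ℂ),
      ιA (dualAction C A ρA c g) = dualAction C (A × B) ρ c (ιA g) := by
    intro c g
    refine ContinuousLinearMap.ext fun x => ?_
    rw [hιAapp, hdA, hdAB, hιAapp, hsplit]
  have hιBmod : ∀ (c : C) (g : B →L[ℂ] ℂ),
      ιB (dualAction C B ρB c g) = dualAction C (A × B) ρ c (ιB g) := by
    intro c g
    refine ContinuousLinearMap.ext fun x => ?_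
    rw [hιBapp, hdB, hdAB, hιBapp, hsplit]
  have hdecomp : ∀ (f : (A × B) →L[ℂ] ℂ) (x : A × B),
      ιA (πA f) x + ιB (πB f) x = f x := by
    intro f x
    rw [hιAapp, hιBapp, hπAapp, hπBapp, ← map_add]
    congr 1
    ext <;> simp
  have hπιA : ∀ g : A →L[ℂ] ℂ, πA (ιA g) = g := by
    intro g
    ext a
    rw [hπAapp, hιAapp]
  have hπιB : ∀ g : B →L[ℂ] ℂ, πB (ιB g) = g := by
    intro g
    ext b
    rw [hπBapp, hιBapp]
  constructor
  · intro h
    constructor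
    · intro E _ _ _ F _ _ _ σE σF hE hF S hSinj hScomm hSsec lam hlam
      obtain ⟨R, hRmod, hRS⟩ := h E F σE σF hE hF S hSinj hScomm hSsec (ιA.comp lam)
        (by
          intro c x
          simp only [ContinuousLinearMap.comp_apply]
          rw [hlam c x, hιAmod])
      refine ⟨πA.comp R, ?_, ?_⟩
      · intro c y
        simp only [ContinuousLinearMap.comp_apply]
        rw [hRmod c y, hπAmod]
      · intro x
        simp only [ContinuousLinearMap.comp_apply]
        rw [hRS x]
        simp only [ContinuousLinearMap.comp_apply]
        rw [hπιA]
    · intro E _ _ _ F _ _ _ σE σF hE hF S hSinj hScomm hSsec lam hlam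
      obtain ⟨R, hRmod, hRS⟩ := h E F σE σF hE hF S hSinj hScomm hSsec (ιB.comp lam)
        (by
          intro c x
          simp only [ContinuousLinearMap.comp_apply]
          rw [hlam c x, hιBmod])
      refine ⟨πB.comp R, ?_, ?_⟩
      · intro c y
        simp only [ContinuousLinearMap.comp_apply]
        rw [hRmod c y, hπBmod]
      · intro x
        simp only [ContinuousLinearMap.comp_apply]
        rw [hRS x]
        simp only [ContinuousLinearMap.comp_apply]
        rw [hπιB]
  · rintro ⟨hA, hB⟩
    intro E _ _ _ F _ _ _ σE σF hE hF S hSinj hScomm hSsec lam hlam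
    obtain ⟨R₁, hR₁mod, hR₁S⟩ := hA E F σE σF hE hF S hSinj hScomm hSsec (πA.comp lam)
      (by
        intro c x
        simp only [ContinuousLinearMap.comp_apply]
        rw [hlam c x, hπAmod])
    obtain ⟨R₂, hR₂mod, hR₂S⟩ := hB E F σE σF hE hF S hSinj hScomm hSsec (πB.comp lam)
      (by
        intro c x
        simp only [ContinuousLinearMap.comp_apply]
        rw [hlam c x, hπBmod])
    refine ⟨ιA.comp R₁ + ιB.comp R₂, ?_, ?_⟩
    · intro c y
      simp only [ContinuousLinearMap.add_apply, ContinuousLinearMap.comp_apply]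
      rw [hR₁mod c y, hR₂mod c y, hιAmod, hιBmod, ← map_add]
    · intro x
      simp only [ContinuousLinearMap.add_apply, ContinuousLinearMap.comp_apply]
      rw [hR₁S x, hR₂S x]
      simp only [ContinuousLinearMap.comp_apply]
      exact ContinuousLinearMap.ext fun z => hdecomp (lam x) z
end

section
/- A ×_T B is projective as a Banach left C-module if and only if both A and B are projective as Banach left C-modules (with the induced module actions). -/
/-- A Banach left `C`-module `(K, σK)` is projective if for every admissible epimorphism
`S : E → F` of Banach left `C`-modules, every bounded `C`-module morphism `K → F`
lifts through `S` to a bounded `C`-module morphism `K → E`. -/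
def IsProjectiveMod (C : Type*) [NonUnitalNormedRing C] [NormedSpace ℂ C]
    (K : Type*) [NormedAddCommGroup K] [NormedSpace ℂ K]
    (σK : C → K →L[ℂ] K) : Prop :=
  ∀ (E : Type) [NormedAddCommGroup E] [NormedSpace ℂ E] [CompleteSpace E]
    (F : Type) [NormedAddCommGroup F] [NormedSpace ℂ F] [CompleteSpace F]
    (σE : C → E →L[ℂ] E) (σF : C → F →L[ℂ] F),
    IsBanachAction C E σE → IsBanachAction C F σF →
    ∀ S : E →L[ℂ] F, Function.Surjective S →
      (∀ c x, S (σE c x) = σF c (S x)) →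
      (∃ S' : F →L[ℂ] E, ∀ x, S (S' (S x)) = S x) →
      ∀ lam : K →L[ℂ] F, (∀ c x, lam (σK c x) = σF c (lam x)) →
        ∃ R : K →L[ℂ] E, (∀ c x, R (σK c x) = σE c (R x)) ∧ ∀ x, S (R x) = lam x

/-- Projectivity passes to retracts of Banach modules. -/
lemma retract_projective {C : Type*} [NonUnitalNormedRing C] [NormedSpace ℂ C]
    {K : Type*} [NormedAddCommGroup K] [NormedSpace ℂ K]
    {K' : Type*} [NormedAddCommGroup K'] [NormedSpace ℂ K']
    (σK : C → K →L[ℂ] K) (σK' : C → K' →L[ℂ] K')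
    (ι : K →L[ℂ] K') (π : K' →L[ℂ] K)
    (hι : ∀ c x, ι (σK c x) = σK' c (ι x))
    (hπ : ∀ c y, π (σK' c y) = σK c (π y))
    (hπι : ∀ x, π (ι x) = x)
    (h : IsProjectiveMod C K' σK') : IsProjectiveMod C K σK := by
  intro E _ _ _ F _ _ _ σE σF hE hF S hS hSmod hsec lam hlam
  obtain ⟨R', hR'mod, hR'⟩ := h E F σE σF hE hF S hS hSmod hsec (lam.comp π)
    (fun c y => by simp only [ContinuousLinearMap.comp_apply, hπ, hlam])
  refine ⟨R'.comp ι, fun c x => by simp only [ContinuousLinearMap.comp_apply, hι, hR'mod],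
    fun x => ?_⟩
  have := hR' (ι x)
  simpa [hπι] using this

/-- A product of projective Banach modules is projective. -/
lemma prod_projective {C : Type*} [NonUnitalNormedRing C] [NormedSpace ℂ C]
    {K₁ : Type*} [NormedAddCommGroup K₁] [NormedSpace ℂ K₁]
    {K₂ : Type*} [NormedAddCommGroup K₂] [NormedSpace ℂ K₂]
    (σ₁ : C → K₁ →L[ℂ] K₁) (σ₂ : C → K₂ →L[ℂ] K₂)
    (σ : C → (K₁ × K₂) →L[ℂ] K₁ × K₂)
    (hσ : ∀ c x, σ c x = (σ₁ c x.1, σ₂ c x.2))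
    (h₁ : IsProjectiveMod C K₁ σ₁) (h₂ : IsProjectiveMod C K₂ σ₂) :
    IsProjectiveMod C (K₁ × K₂) σ := by
  intro E _ _ _ F _ _ _ σE σF hE hF S hS hSmod hsec lam hlam
  obtain ⟨R₁, hR₁mod, hR₁⟩ := h₁ E F σE σF hE hF S hS hSmod hsec
    (lam.comp (ContinuousLinearMap.inl ℂ K₁ K₂))
    (fun c x => by
      have h0 : (ContinuousLinearMap.inl ℂ K₁ K₂) (σ₁ c x) = σ c (x, 0) := by
        rw [hσ]; simp
      simp only [ContinuousLinearMap.comp_apply, h0, hlam,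
        ContinuousLinearMap.inl_apply])
  obtain ⟨R₂, hR₂mod, hR₂⟩ := h₂ E F σE σF hE hF S hS hSmod hsec
    (lam.comp (ContinuousLinearMap.inr ℂ K₁ K₂))
    (fun c x => by
      have h0 : (ContinuousLinearMap.inr ℂ K₁ K₂) (σ₂ c x) = σ c (0, x) := by
        rw [hσ]; simp
      simp only [ContinuousLinearMap.comp_apply, h0, hlam,
        ContinuousLinearMap.inr_apply])
  refine ⟨R₁.comp (ContinuousLinearMap.fst ℂ K₁ K₂) +
    R₂.comp (ContinuousLinearMap.snd ℂ K₁ K₂), fun c x => ?_, fun x => ?_⟩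
  · simp only [ContinuousLinearMap.add_apply, ContinuousLinearMap.comp_apply,
      ContinuousLinearMap.coe_fst', ContinuousLinearMap.coe_snd', hσ]
    rw [hR₁mod, hR₂mod, ← map_add]
  · simp only [ContinuousLinearMap.add_apply, ContinuousLinearMap.comp_apply,
      ContinuousLinearMap.coe_fst', ContinuousLinearMap.coe_snd', map_add]
    rw [hR₁, hR₂]
    simp only [ContinuousLinearMap.comp_apply]
    rw [← map_add]
    congr 1
    ext <;> simp

/-- Let `A ×_T B` be a Banach left `C`-module whose action `τ` is compatible with the
decomposition into the copy of `A` and the complementary copy `η_B(B)` of `B`, and give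
`A` and `B` the induced actions `c·a = c·(a,0)`, `c·b = c·(0,b)`. Then `A ×_T B` is
projective as a Banach left `C`-module if and only if both `A` and `B` are projective
Banach left `C`-modules. -/
theorem lau_projective_iff {A B C : Type*}
    [NonUnitalNormedRing A] [NormedSpace ℂ A] [CompleteSpace A]
    [NonUnitalNormedRing B] [NormedSpace ℂ B] [CompleteSpace B]
    [NonUnitalNormedRing C] [NormedSpace ℂ C] [CompleteSpace C]
    (T : B →L[ℂ] A) (hTmul : ∀ x y : B, T (x * y) = T x * T y)
    (hTnorm : ∀ b : B, ‖T b‖ ≤ ‖b‖)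
    (τ : C → (A × B) →L[ℂ] (A × B)) (hτ : IsBanachAction C (A × B) τ)
    (hcompatA : ∀ (c : C) (a : A), (τ c (a, 0)).2 = 0)
    (hcompatB : ∀ (c : C) (b : B),
      τ c (-(T b), b) = (-(T ((τ c (0, b)).2)), (τ c (0, b)).2)) :
    IsProjectiveMod C (A × B) τ ↔
      (IsProjectiveMod C A (fun c => (ContinuousLinearMap.fst ℂ A B).comp
        ((τ c).comp (ContinuousLinearMap.inl ℂ A B))) ∧
       IsProjectiveMod C B (fun c => (ContinuousLinearMap.snd ℂ A B).comp
        ((τ c).comp (ContinuousLinearMap.inr ℂ A B)))) := by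
  
  set σA : C → A →L[ℂ] A := fun c => (ContinuousLinearMap.fst ℂ A B).comp
    ((τ c).comp (ContinuousLinearMap.inl ℂ A B)) with hσA
  set σB : C → B →L[ℂ] B := fun c => (ContinuousLinearMap.snd ℂ A B).comp
    ((τ c).comp (ContinuousLinearMap.inr ℂ A B)) with hσB
  set σ' : C → (A × B) →L[ℂ] A × B := fun c => (σA c).prodMap (σB c) with hσ'
  have hσ'app : ∀ c x, σ' c x = (σA c x.1, σB c x.2) := fun c x => rfl
  -- key structural facts
  have hτA : ∀ (c : C) (a : A), τ c (a, 0) = (σA c a, 0) := by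
    intro c a
    ext
    · rfl
    · exact hcompatA c a
  have hτB : ∀ (c : C) (b : B), τ c (-(T b), b) = (-(T (σB c b)), σB c b) := by
    intro c b
    exact hcompatB c b
  have key : ∀ (c : C) (x : A × B),
      τ c x = (σA c (x.1 + T x.2) - T (σB c x.2), σB c x.2) := by
    intro c x
    have hx : x = ((x.1 + T x.2, 0) : A × B) + (-(T x.2), x.2) := by
      ext <;> simp
    rw [hx, map_add, hτA, hτB]
    ext <;> simp [sub_eq_add_neg]
  -- the isomorphism Φ(a,b) = (a + T b, b), Ψ(a,b) = (a - T b, b)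
  set Φ : (A × B) →L[ℂ] A × B :=
    ((ContinuousLinearMap.fst ℂ A B) + T.comp (ContinuousLinearMap.snd ℂ A B)).prod
      (ContinuousLinearMap.snd ℂ A B) with hΦdef
  set Ψ : (A × B) →L[ℂ] A × B :=
    ((ContinuousLinearMap.fst ℂ A B) - T.comp (ContinuousLinearMap.snd ℂ A B)).prod
      (ContinuousLinearMap.snd ℂ A B) with hΨdef
  have hΦapp : ∀ x : A × B, Φ x = (x.1 + T x.2, x.2) := fun x => rfl
  have hΨapp : ∀ x : A × B, Ψ x = (x.1 - T x.2, x.2) := fun x => rfl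
  have hΨΦ : ∀ x, Ψ (Φ x) = x := by intro x; simp [hΦapp, hΨapp]
  have hΦΨ : ∀ x, Φ (Ψ x) = x := by intro x; simp [hΦapp, hΨapp]
  have hΦmod : ∀ c x, Φ (τ c x) = σ' c (Φ x) := by
    intro c x
    rw [key, hΦapp, hΦapp, hσ'app]
    simp
  have hΨmod : ∀ c x, Ψ (σ' c x) = τ c (Ψ x) := by
    intro c x
    rw [hσ'app, hΨapp, hΨapp, key]
    simp
  -- inclusion/projection maps for the factors of σ'
  have hinlmod : ∀ (c : C) (a : A),
      (ContinuousLinearMap.inl ℂ A B) (σA c a) = σ' c ((ContinuousLinearMap.inl ℂ A B) a) := by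
    intro c a
    simp [hσ'app]
  have hfstmod : ∀ (c : C) (y : A × B),
      (ContinuousLinearMap.fst ℂ A B) (σ' c y) = σA c ((ContinuousLinearMap.fst ℂ A B) y) := by
    intro c y; rfl
  have hinrmod : ∀ (c : C) (b : B),
      (ContinuousLinearMap.inr ℂ A B) (σB c b) = σ' c ((ContinuousLinearMap.inr ℂ A B) b) := by
    intro c b
    simp [hσ'app]
  have hsndmod : ∀ (c : C) (y : A × B),
      (ContinuousLinearMap.snd ℂ A B) (σ' c y) = σB c ((ContinuousLinearMap.snd ℂ A B) y) := by
    intro c y; rfl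
  constructor
  · intro h
    have hσ'proj : IsProjectiveMod C (A × B) σ' :=
      retract_projective σ' τ Ψ Φ hΨmod hΦmod hΦΨ h
    constructor
    · exact retract_projective σA σ' (ContinuousLinearMap.inl ℂ A B)
        (ContinuousLinearMap.fst ℂ A B) hinlmod hfstmod (fun a => rfl) hσ'proj
    · exact retract_projective σB σ' (ContinuousLinearMap.inr ℂ A B)
        (ContinuousLinearMap.snd ℂ A B) hinrmod hsndmod (fun b => rfl) hσ'proj
  · rintro ⟨hA, hB⟩
    have hσ'proj : IsProjectiveMod C (A × B) σ' :=
      prod_projective σA σB σ' hσ'app hA hB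
    exact retract_projective τ σ' Φ Ψ hΦmod hΨmod hΨΦ hσ'proj
end

section
/- A ×_T B has a bounded approximate identity if and only if both A and B have bounded approximate identities. -/
/-- A bounded approximate identity for a Banach algebra `D` with multiplication `mul`:
a bounded net `(e_i)` with `e_i d → d` and `d e_i → d` for all `d`. -/
def HasBAI (D : Type*) [SeminormedAddCommGroup D] (mul : D → D → D) : Prop :=
  ∃ (M : ℝ) (ι : Type) (l : Filter ι) (e : ι → D), l.NeBot ∧ (∀ i, ‖e i‖ ≤ M) ∧
    (∀ d, Filter.Tendsto (fun i => mul (e i) d) l (nhds d)) ∧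
    (∀ d, Filter.Tendsto (fun i => mul d (e i)) l (nhds d))

/-!
The shear `(a, b) ↦ (a + T b, b)` is a topological linear automorphism of `A × B` which, because
`T` is multiplicative, carries the `T`-Lau multiplication to the coordinatewise one. Bounded
approximate identities are transported by bounded multiplicative surjections, so `A ×_T B` has
one iff the direct product `A × B` has one. For the direct product, project a bounded approximate
identity to the factors; conversely, the product of bounded approximate identities of the
factors is one.
-/

open Filter NNReal

namespace HasBAI

variable {D E : Type*} [SeminormedAddCommGroup D] [SeminormedAddCommGroup E]
  {mulD : D → D → D} {mulE : E → E → E}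

theorem map (f : D → E) (C : ℝ≥0) (hf_cont : Continuous f) (hf_bound : ∀ x, ‖f x‖ ≤ C * ‖x‖)
    (hf_surj : Function.Surjective f) (hf_mul : ∀ x y, f (mulD x y) = mulE (f x) (f y))
    (h : HasBAI D mulD) : HasBAI E mulE := by
  obtain ⟨M, ι, l, e, hl, he_bound, he_left, he_right⟩ := h
  refine ⟨C * M, ι, l, f ∘ e, hl, fun i => ?_, fun d => ?_, fun d => ?_⟩
  · exact (hf_bound _).trans (mul_le_mul_of_nonneg_left (he_bound i) C.2)
  · obtain ⟨x, rfl⟩ := hf_surj d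
    simpa only [Function.comp_def, hf_mul] using (hf_cont.tendsto x).comp (he_left x)
  · obtain ⟨x, rfl⟩ := hf_surj d
    simpa only [Function.comp_def, hf_mul] using (hf_cont.tendsto x).comp (he_right x)

theorem _root_.ContinuousLinearEquiv.hasBAI_iff {𝕜 : Type*} [NontriviallyNormedField 𝕜]
    [NormedSpace 𝕜 D] [NormedSpace 𝕜 E] (φ : D ≃L[𝕜] E)
    (hφ : ∀ x y, φ (mulD x y) = mulE (φ x) (φ y)) : HasBAI D mulD ↔ HasBAI E mulE := by
  have hφ_symm : ∀ x y, φ.symm (mulE x y) = mulD (φ.symm x) (φ.symm y) := fun x y =>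
    φ.injective (by simp [hφ])
  exact ⟨map φ ‖(φ : D →L[𝕜] E)‖₊ φ.continuous (φ : D →L[𝕜] E).le_opNorm φ.surjective hφ,
    map φ.symm ‖(φ.symm : E →L[𝕜] D)‖₊ φ.symm.continuous (φ.symm : E →L[𝕜] D).le_opNorm
      φ.symm.surjective hφ_symm⟩

theorem prod (hD : HasBAI D mulD) (hE : HasBAI E mulE) :
    HasBAI (D × E) fun p q => (mulD p.1 q.1, mulE p.2 q.2) := by
  obtain ⟨M₁, ι₁, l₁, u, hl₁, hu_bound, hu_left, hu_right⟩ := hD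
  obtain ⟨M₂, ι₂, l₂, v, hl₂, hv_bound, hv_left, hv_right⟩ := hE
  refine ⟨max M₁ M₂, ι₁ × ι₂, l₁ ×ˢ l₂, fun k => (u k.1, v k.2), hl₁.prod hl₂,
    fun k => max_le_max (hu_bound k.1) (hv_bound k.2), fun d => ?_, fun d => ?_⟩
  · exact ((hu_left d.1).comp tendsto_fst).prodMk_nhds ((hv_left d.2).comp tendsto_snd)
  · exact ((hu_right d.1).comp tendsto_fst).prodMk_nhds ((hv_right d.2).comp tendsto_snd)

theorem prod_iff :
    HasBAI (D × E) (fun p q => (mulD p.1 q.1, mulE p.2 q.2)) ↔ HasBAI D mulD ∧ HasBAI E mulE :=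
  ⟨fun h => ⟨h.map Prod.fst 1 continuous_fst (by simp [norm_fst_le])
      (fun d => ⟨(d, 0), rfl⟩) fun _ _ => rfl,
    h.map Prod.snd 1 continuous_snd (by simp [norm_snd_le])
      (fun d => ⟨(0, d), rfl⟩) fun _ _ => rfl⟩,
    fun h => h.1.prod h.2⟩

end HasBAI

section Shear

variable {R M N : Type*} [Ring R] [AddCommGroup M] [Module R M] [TopologicalSpace M]
  [IsTopologicalAddGroup M] [AddCommGroup N] [Module R N] [TopologicalSpace N]

def shearEquiv (S : N →L[R] M) : (M × N) ≃L[R] (M × N) :=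
  ContinuousLinearEquiv.equivOfInverse
    ((ContinuousLinearMap.fst R M N + S.comp (ContinuousLinearMap.snd R M N)).prod
      (ContinuousLinearMap.snd R M N))
    ((ContinuousLinearMap.fst R M N - S.comp (ContinuousLinearMap.snd R M N)).prod
      (ContinuousLinearMap.snd R M N))
    (fun p => by simp) (fun p => by simp)

@[simp]
theorem shearEquiv_apply (S : N →L[R] M) (p : M × N) : shearEquiv S p = (p.1 + S p.2, p.2) :=
  rfl

end Shear

theorem shearEquiv_lauMul {A B : Type*} [NonUnitalNormedRing A] [NormedSpace ℂ A]
    [NonUnitalNormedRing B] [NormedSpace ℂ B] (T : B →L[ℂ] A)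
    (hTmul : ∀ x y : B, T (x * y) = T x * T y) (p q : A × B) :
    shearEquiv T (lauMul T p q) = shearEquiv T p * shearEquiv T q := by
  ext
  · simp only [shearEquiv_apply, lauMul, Prod.fst_mul, hTmul, add_mul, mul_add]
    abel
  · rfl

theorem lau_bai_iff_general {A B : Type*}
    [NonUnitalNormedRing A] [NormedSpace ℂ A]
    [NonUnitalNormedRing B] [NormedSpace ℂ B]
    (T : B →L[ℂ] A) (hTmul : ∀ x y : B, T (x * y) = T x * T y) :
    HasBAI (A × B) (lauMul T) ↔ (HasBAI A (· * ·) ∧ HasBAI B (· * ·)) :=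
  ((shearEquiv T).hasBAI_iff (shearEquiv_lauMul T hTmul)).trans HasBAI.prod_iff

/-- `A ×_T B` has a bounded approximate identity if and only if both `A` and `B` have
bounded approximate identities. -/
theorem lau_bai_iff {A B : Type*}
    [NonUnitalNormedRing A] [NormedSpace ℂ A] [CompleteSpace A]
    [NonUnitalNormedRing B] [NormedSpace ℂ B] [CompleteSpace B]
    (T : B →L[ℂ] A) (hTmul : ∀ x y : B, T (x * y) = T x * T y)
    (hTnorm : ∀ b : B, ‖T b‖ ≤ ‖b‖) :
    HasBAI (A × B) (lauMul T) ↔ (HasBAI A (· * ·) ∧ HasBAI B (· * ·)) :=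
  lau_bai_iff_general T hTmul
end
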